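/- Let Q ∈ ℂ^{n×n} be Hermitian PSD, P ∈ ℂ^{n×n} Hermitian positive definite, and B ∈ ℂ^{n×s}. For ε ≥ 0 define W(ε) = (Q + εP)^{-1} B (assuming invertibility). Then f(ε) = Tr(W(ε)ᴴ P W(ε)) is monotonically non-increasing in ε on [0, ∞). -/

import Mathlib

open Matrix
open scoped ComplexOrder

/-!
Write `A = (Q + ε₁P)⁻¹`, `C = (Q + ε₂P)⁻¹` and `δ = ε₂ - ε₁ ≥ 0`. The resolvent identity
`A - C = δ • A P C = δ • C P A` turns `A P A - C P C` into
`(A - C) P (A - C) + 2δ • C P A P C`, a sum of positive semidefinite matrices; conjugating by `B`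
and taking the real part of the trace gives the inequality.
-/

namespace Matrix

theorem re_trace_conjTranspose_mul_mul_le {m n : Type*} [Fintype m] [Fintype n]
    {X Y P : Matrix n n ℂ} (B : Matrix n m ℂ) (hX : X.IsHermitian) (hY : Y.IsHermitian)
    (h : (X * P * X - Y * P * Y).PosSemidef) :
    ((Y * B)ᴴ * P * (Y * B)).trace.re ≤ ((X * B)ᴴ * P * (X * B)).trace.re := by
  have hconj : ∀ Z : Matrix n n ℂ, Z.IsHermitian →
      (Z * B)ᴴ * P * (Z * B) = Bᴴ * (Z * P * Z) * B :=
    fun Z hZ ↦ by rw [conjTranspose_mul, hZ.eq]; simp only [Matrix.mul_assoc]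
  have htr := (h.conjTranspose_mul_mul_same B).trace_nonneg
  rw [Matrix.mul_sub, Matrix.sub_mul, trace_sub, sub_nonneg] at htr
  rw [hconj X hX, hconj Y hY]
  exact (Complex.le_def.mp htr).1

variable {n R : Type*} [Fintype n] [DecidableEq n]
  [CommRing R] [PartialOrder R] [StarRing R] [StarOrderedRing R]

theorem posSemidef_inv_mul_mul_inv_sub_of_eq_add_smul {M N P : Matrix n n R}
    (hM : M.PosSemidef) (hP : P.PosSemidef) (hMu : IsUnit M) (hNu : IsUnit N)
    {δ : R} (hδ : 0 ≤ δ) (hN : N = M + δ • P) :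
    (M⁻¹ * P * M⁻¹ - N⁻¹ * P * N⁻¹).PosSemidef := by
  set A := M⁻¹
  set C := N⁻¹
  have hA : A.PosSemidef := hM.inv
  have hC : C.PosSemidef := (hN ▸ hM.add (hP.smul hδ)).inv
  have hδs : star δ = δ := IsSelfAdjoint.of_nonneg hδ
  -- the resolvent identity, in both orders since `A`, `C`, `P` are Hermitian
  have hAC : A - C = δ • (A * P * C) := by
    have hNM : N - M = δ • P := by rw [hN, add_sub_cancel_left]
    rw [inv_sub_inv (by simp [hMu, hNu]), hNM, Matrix.mul_smul, Matrix.smul_mul]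
  have hCA : A - C = δ • (C * P * A) := by
    have := congrArg conjTranspose hAC
    rwa [conjTranspose_sub, conjTranspose_smul, conjTranspose_mul, conjTranspose_mul,
      hA.1.eq, hC.1.eq, hP.1.eq, hδs, ← Matrix.mul_assoc] at this
  have hsplit : A * P * A - C * P * C =
      (A - C)ᴴ * P * (A - C) + δ • ((P * C)ᴴ * A * (P * C)) +
        δ • ((P * C)ᴴ * A * (P * C)) := by
    have hDPC : (A - C) * P * C = δ • ((P * C)ᴴ * A * (P * C)) := by
      rw [hCA, conjTranspose_mul, hC.1.eq, hP.1.eq]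
      simp only [Matrix.smul_mul, Matrix.mul_assoc]
    have hCPD : C * P * (A - C) = δ • ((P * C)ᴴ * A * (P * C)) := by
      rw [hAC, conjTranspose_mul, hC.1.eq, hP.1.eq]
      simp only [Matrix.mul_smul, Matrix.mul_assoc]
    calc A * P * A - C * P * C
        = (A - C)ᴴ * P * (A - C) + (A - C) * P * C + C * P * (A - C) := by
          rw [conjTranspose_sub, hA.1.eq, hC.1.eq]
          noncomm_ring
      _ = _ := by rw [hDPC, hCPD]
  have hterm := (hA.conjTranspose_mul_mul_same (P * C)).smul hδ
  rw [hsplit]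
  exact ((hP.conjTranspose_mul_mul_same (A - C)).add hterm).add hterm

end Matrix

/-- Let `Q` be Hermitian PSD, `P` Hermitian positive definite, `B` arbitrary, and
`W(ε) = (Q + εP)⁻¹ B` (assuming invertibility). Then `ε ↦ Tr(W(ε)ᴴ P W(ε))` is
monotonically non-increasing on `[0, ∞)`. -/
theorem stmt_9 (n s : ℕ) (Q P : Matrix (Fin n) (Fin n) ℂ) (B : Matrix (Fin n) (Fin s) ℂ)
    (hQ : Q.PosSemidef) (hP : P.PosDef)
    (ε₁ ε₂ : ℝ) (h0 : 0 ≤ ε₁) (h12 : ε₁ ≤ ε₂)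
    (h1 : IsUnit (Q + (ε₁ : ℂ) • P)) (h2 : IsUnit (Q + (ε₂ : ℂ) • P)) :
    ((((Q + (ε₂ : ℂ) • P)⁻¹ * B)ᴴ * P * ((Q + (ε₂ : ℂ) • P)⁻¹ * B)).trace).re ≤
      ((((Q + (ε₁ : ℂ) • P)⁻¹ * B)ᴴ * P * ((Q + (ε₁ : ℂ) • P)⁻¹ * B)).trace).re := by
  have hδ : (0 : ℂ) ≤ ((ε₂ - ε₁ : ℝ) : ℂ) := by exact_mod_cast sub_nonneg.2 h12
  have hM₁ : (Q + (ε₁ : ℂ) • P).PosSemidef :=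
    hQ.add (hP.posSemidef.smul (by exact_mod_cast h0 : (0 : ℂ) ≤ ε₁))
  have hM₂ : Q + (ε₂ : ℂ) • P = Q + (ε₁ : ℂ) • P + ((ε₂ - ε₁ : ℝ) : ℂ) • P := by
    push_cast
    module
  have hM₂psd : (Q + (ε₂ : ℂ) • P).PosSemidef := hM₂ ▸ hM₁.add (hP.posSemidef.smul hδ)
  exact re_trace_conjTranspose_mul_mul_le B hM₁.inv.1 hM₂psd.inv.1
    (posSemidef_inv_mul_mul_inv_sub_of_eq_add_smul hM₁ hP.posSemidef h1 h2 hδ hM₂)
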